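/- arXiv:1706.05706 — 2 statements merged into one kernel-verified Lean document; each statement's English description precedes it below -/
import Mathlib

section
/- Let U be an n-by-n unitary matrix with simple eigenvalues λ₁,…,λₙ and orthonormal eigenvectors z₁,…,zₙ, each with nonzero first component. Let S = diag(β, 1, …, 1) with β ∈ S^1 \ {1}. Then for each j, the characteristic polynomial of US evaluated at λⱼ satisfies χ_{US}(λⱼ) = χ'_U(λⱼ) · λⱼ (1-β) |aⱼ|², where aⱼ is the first component of zⱼ; in particular χ_{US}(λⱼ) ≠ 0. -/
/-!
Conjugating by `Z`, the matrix `US` becomes `Λ Zᴴ S Z = Λ + (β - 1) Λ ā aᵀ`, a rank-one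
perturbation of `Λ`, where `a` is the first row of `Z`. At `ζ = λⱼ` the diagonal part of
`ζ - Λ - (β - 1) Λ ā aᵀ` has a single zero entry, in position `j`, so the determinant is the
`(j, j)` entry `λⱼ (1 - β) |aⱼ|²` of the rank-one part times `∏_{i ≠ j} (λⱼ - λᵢ) = χ'_U(λⱼ)`.
Each factor is nonzero: `λⱼ ≠ 0` as `U` is unitary, `β ≠ 1`, `aⱼ ≠ 0`, and the `λᵢ` are distinct.
-/

open Matrix Polynomial

namespace Matrix

variable {m R K : Type*} [Fintype m] [DecidableEq m]

theorem charpoly_conj_of_mul_eq_one [CommRing R] {Z B : Matrix m m R} (A : Matrix m m R)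
    (h : B * Z = 1) : (Z * A * B).charpoly = A.charpoly := by
  rw [charpoly_mul_comm, ← Matrix.mul_assoc, h, Matrix.one_mul]

theorem det_updateRow_diagonal [CommRing R] (d v : m → R) (j : m) :
    (updateRow (diagonal d) j v).det = v j * ∏ i ∈ Finset.univ.erase j, d i := by
  rw [← det_transpose, ← updateCol_transpose, diagonal_transpose, ← cramer_apply,
    cramer_eq_adjugate_mulVec, adjugate_diagonal, mulVec_diagonal, mul_comm]

omit [Fintype m] in
theorem diagonal_update_one_eq_one_add_vecMulVec [Ring R] (i : m) (β : R) :
    diagonal (Function.update (fun _ => (1 : R)) i β)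
      = 1 + vecMulVec (Pi.single i (β - 1)) (Pi.single i 1) := by
  ext k l
  by_cases hkl : k = l
  · subst hkl
    by_cases hk : k = i
    · subst hk; simp [vecMulVec_apply]
    · simp [hk, vecMulVec_apply]
  · simp [hkl, vecMulVec_apply, Pi.single_apply]
    grind

theorem det_diagonal_add_vecMulVec_of_eq_zero [Field K] {d p : m → K} (q : m → K) {j : m}
    (hd : d j = 0) (hp : p j ≠ 0) :
    (diagonal d + vecMulVec p q).det = p j * q j * ∏ i ∈ Finset.univ.erase j, d i := by
  -- Row `j` is `p j • q`; subtracting multiples of it clears the rank-one part of the others.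
  set u : m → K := Function.update (fun i => p i / p j) j 0
  have hfactor : diagonal d + vecMulVec p q
      = (1 + vecMulVec u (Pi.single j 1)) * updateRow (diagonal d) j (p j • q) := by
    rw [add_mul, one_mul, vecMulVec_mul, single_one_vecMul]
    ext i k
    by_cases hij : i = j
    · subst hij
      simp [u, vecMulVec_apply, diagonal_apply, hd]
    · simp [u, hij, vecMulVec_apply]
      field_simp
  rw [hfactor, det_mul, vecMulVec_eq Unit, det_one_add_replicateCol_mul_replicateRow,
    det_updateRow_diagonal]
  simp [u]

theorem eval_charpoly_diagonal_add_vecMulVec [Field K] (d : m → K) {p : m → K} (q : m → K)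
    {j : m} (hp : p j ≠ 0) :
    (diagonal d + vecMulVec p q).charpoly.eval (d j)
      = -(p j * q j) * ∏ i ∈ Finset.univ.erase j, (d j - d i) := by
  have hshift : scalar m (d j) - (diagonal d + vecMulVec p q)
      = diagonal (fun i => d j - d i) + vecMulVec (-p) q := by
    rw [scalar_apply, sub_add_eq_sub_sub, diagonal_sub, neg_vecMulVec, sub_eq_add_neg]
  rw [eval_charpoly, hshift, det_diagonal_add_vecMulVec_of_eq_zero q (sub_self _)
    (neg_ne_zero.mpr hp), Pi.neg_apply, neg_mul]

theorem mul_mul_one_add_vecMulVec_mul [CommRing R] {Z B : Matrix m m R} (A : Matrix m m R)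
    (h : B * Z = 1) (x y : m → R) :
    B * (Z * A * B * (1 + vecMulVec x y)) * Z = A + vecMulVec ((A * B) *ᵥ x) (y ᵥ* Z) := by
  simp only [Matrix.mul_add, Matrix.add_mul, Matrix.mul_one, Matrix.mul_assoc]
  simp only [← Matrix.mul_assoc B Z, h, Matrix.one_mul, mul_vecMulVec, vecMulVec_mul,
    mulVec_mulVec, Matrix.mul_one]

end Matrix

theorem Polynomial.eval_derivative_prod_X_sub_C {ι R : Type*} [Fintype ι] [DecidableEq ι]
    [CommRing R] (d : ι → R) (j : ι) :
    (derivative (∏ i, (X - C (d i)))).eval (d j)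
      = ∏ i ∈ Finset.univ.erase j, (d j - d i) := by
  rw [← Finset.mul_prod_erase Finset.univ _ (Finset.mem_univ j), derivative_mul]
  simp [eval_prod]

theorem stmt_4_general (n : ℕ) (U Z : Matrix (Fin (n+1)) (Fin (n+1)) ℂ) (lam : Fin (n+1) → ℂ)
    (hU : U ∈ Matrix.unitaryGroup (Fin (n+1)) ℂ)
    (hZ : Z ∈ Matrix.unitaryGroup (Fin (n+1)) ℂ)
    (hdec : U = Z * Matrix.diagonal lam * Zᴴ)
    (hsimple : Function.Injective lam)
    (ha : ∀ j : Fin (n+1), Z 0 j ≠ 0)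
    (β : ℂ) (hβ1 : β ≠ 1)
    (S : Matrix (Fin (n+1)) (Fin (n+1)) ℂ)
    (hS : S = Matrix.diagonal (Function.update (fun _ : Fin (n+1) => (1 : ℂ)) 0 β))
    (j : Fin (n+1)) :
    Polynomial.eval (lam j) (U * S).charpoly =
        Polynomial.eval (lam j) (Polynomial.derivative U.charpoly) *
          (lam j * (1 - β) * ((‖Z 0 j‖ ^ 2 : ℝ) : ℂ)) ∧
      Polynomial.eval (lam j) (U * S).charpoly ≠ 0 := by
  have hZZ : Zᴴ * Z = 1 := mem_unitaryGroup_iff'.mp hZ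
  have hZZ' : Z * Zᴴ = 1 := mem_unitaryGroup_iff.mp hZ
  have hlam : lam j ≠ 0 := by
    have hdet : ∏ i, lam i ≠ 0 := by
      rw [← det_diagonal, ← det_conj_of_mul_eq_one hZZ' hZZ, ← hdec]
      exact (Unitary.isUnit_coe (U := ⟨_, det_of_mem_unitary hU⟩)).ne_zero
    exact Finset.prod_ne_zero_iff.mp hdet j (Finset.mem_univ j)
  set p : Fin (n+1) → ℂ := fun i => lam i * star (Z 0 i) * (β - 1)
  have hconj : Zᴴ * (U * S) * Z = diagonal lam + vecMulVec p (Z 0) := by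
    rw [hdec, hS, diagonal_update_one_eq_one_add_vecMulVec, mul_mul_one_add_vecMulVec_mul _ hZZ,
      single_one_vecMul]
    congr 2
    ext i
    simp [p]
  have hp : p j ≠ 0 :=
    mul_ne_zero (mul_ne_zero hlam (star_ne_zero.mpr (ha j))) (sub_ne_zero.mpr hβ1)
  have hUS : (U * S).charpoly.eval (lam j)
      = -(p j * Z 0 j) * ∏ i ∈ Finset.univ.erase j, (lam j - lam i) := by
    rw [← charpoly_conj_of_mul_eq_one (U * S) hZZ', hconj,
      eval_charpoly_diagonal_add_vecMulVec _ _ hp]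
  have hU' : (derivative U.charpoly).eval (lam j)
      = ∏ i ∈ Finset.univ.erase j, (lam j - lam i) := by
    rw [hdec, charpoly_conj_of_mul_eq_one _ hZZ, charpoly_diagonal, eval_derivative_prod_X_sub_C]
  have hsep : ∏ i ∈ Finset.univ.erase j, (lam j - lam i) ≠ 0 :=
    Finset.prod_ne_zero_iff.mpr fun i hi =>
      sub_ne_zero.mpr fun h => (Finset.mem_erase.mp hi).1 (hsimple h).symm
  refine ⟨?_, ?_⟩
  · rw [hUS, hU']
    push_cast
    rw [← Complex.mul_conj']
    simp only [p, Complex.star_def]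
    ring
  · rw [hUS]
    exact mul_ne_zero (neg_ne_zero.mpr (mul_ne_zero hp (ha j))) hsep

/-- For a unitary `U = Z Λ Z*` with simple eigenvalues `λⱼ` and orthonormal eigenvectors
whose first components `aⱼ = Z 0 j` are nonzero, and `S = diag(β,1,…,1)` with
`β ∈ S¹ \ {1}`, one has `χ_{US}(λⱼ) = χ'_U(λⱼ) · λⱼ(1-β)|aⱼ|² ≠ 0`. -/
theorem stmt_4 (n : ℕ) (U Z : Matrix (Fin (n+1)) (Fin (n+1)) ℂ) (lam : Fin (n+1) → ℂ)
    (hU : U ∈ Matrix.unitaryGroup (Fin (n+1)) ℂ)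
    (hZ : Z ∈ Matrix.unitaryGroup (Fin (n+1)) ℂ)
    (hdec : U = Z * Matrix.diagonal lam * Zᴴ)
    (hsimple : Function.Injective lam)
    (ha : ∀ j : Fin (n+1), Z 0 j ≠ 0)
    (β : ℂ) (hβ : ‖β‖ = 1) (hβ1 : β ≠ 1)
    (S : Matrix (Fin (n+1)) (Fin (n+1)) ℂ)
    (hS : S = Matrix.diagonal (Function.update (fun _ : Fin (n+1) => (1 : ℂ)) 0 β))
    (j : Fin (n+1)) :
    Polynomial.eval (lam j) (U * S).charpoly =
        Polynomial.eval (lam j) (Polynomial.derivative U.charpoly) *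
          (lam j * (1 - β) * ((‖Z 0 j‖ ^ 2 : ℝ) : ℂ)) ∧
      Polynomial.eval (lam j) (U * S).charpoly ≠ 0 :=
  stmt_4_general n U Z lam hU hZ hdec hsimple ha β hβ1 S hS j
end

section
/- Let C = C(α₀,…,α_{n-1}, bₙ) be the (n+1)-by-(n+1) CMV matrix with αⱼ ∈ 𝔻, bₙ ∈ S^1, partitioned in blocks C = [[C₁₁, C₁₂],[C₂₁, C₂₂]] with C₁₁ of size (m+1)×(m+1) for 0 ≤ m < n. Then the trailing principal submatrix C₂₂ has no eigenvalues on the unit circle. -/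
noncomputable section
open Matrix Polynomial

/-- `ρ(α) = (1-|α|²)^{1/2}` viewed as a complex number. -/
def rho (a : ℂ) : ℂ := (Real.sqrt (1 - ‖a‖ ^ 2) : ℝ)

/-- The 2×2 block `Θ(α)`. -/
def Theta (a : ℂ) : Matrix (Fin 2) (Fin 2) ℂ :=
  !![(starRingEnd ℂ) a, rho a; rho a, -a]

/-- The factor `L = Θ(α₀) ⊕ Θ(α₂) ⊕ ⋯` (last diagonal entry `conj b` when `n` is even). -/
def Lmat (n : ℕ) (α : ℕ → ℂ) (b : ℂ) : Matrix (Fin (n+1)) (Fin (n+1)) ℂ :=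
  Matrix.of fun i j =>
    if n % 2 = 0 ∧ i.val = n then (if j.val = n then (starRingEnd ℂ) b else 0)
    else if n % 2 = 0 ∧ j.val = n then 0
    else if i.val % 2 = 0 then
      if j.val = i.val then (starRingEnd ℂ) (α i.val)
      else if j.val = i.val + 1 then rho (α i.val) else 0
    else
      if j.val = i.val - 1 then rho (α (i.val - 1))
      else if j.val = i.val then -(α (i.val - 1)) else 0

/-- The factor `M = 1 ⊕ Θ(α₁) ⊕ Θ(α₃) ⊕ ⋯` (last diagonal entry `conj b` when `n` is odd). -/
def Mmat (n : ℕ) (α : ℕ → ℂ) (b : ℂ) : Matrix (Fin (n+1)) (Fin (n+1)) ℂ :=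
  Matrix.of fun i j =>
    if i.val = 0 then (if j.val = 0 then 1 else 0)
    else if n % 2 = 1 ∧ i.val = n then (if j.val = n then (starRingEnd ℂ) b else 0)
    else if n % 2 = 1 ∧ j.val = n then 0
    else if i.val % 2 = 1 then
      if j.val = i.val then (starRingEnd ℂ) (α i.val)
      else if j.val = i.val + 1 then rho (α i.val) else 0
    else
      if j.val = i.val - 1 then rho (α (i.val - 1))
      else if j.val = i.val then -(α (i.val - 1)) else 0

/-- The `(n+1)×(n+1)` CMV matrix `C(α₀,…,α_{n-1},bₙ) = L·M`. -/
def CMV (n : ℕ) (α : ℕ → ℂ) (b : ℂ) : Matrix (Fin (n+1)) (Fin (n+1)) ℂ :=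
  Lmat n α b * Mmat n α b

/-!
`C = LM` is unitary, both factors being block diagonal with unitary blocks `Θ(αⱼ)` and
unimodular `1 × 1` corners. If `C₂₂ x = μ x` with `|μ| = 1`, extend `x` by zero to `v`. Then
`Cv` agrees with `μv` on the support of `v`, so `Cv - μv ⊥ v`, and `‖Cv‖ = ‖v‖ = ‖μv‖` forces
`Cv = μv` by Pythagoras. Thus `v` is an eigenvector of `C` with `v₀ = 0`. Rewriting `Cv = μv`
as `Mv = μLᴴv`, row `k + 1` of one side only involves `vₖ, vₖ₊₁`, while the other is, up to
the factor `μ`, `ρ(αₖ₊₁) vₖ₊₂` plus a multiple of `vₖ₊₁`. As `ρ(αⱼ) ≠ 0`, the vanishing of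
`v₀` propagates to all of `v`, whence `x = 0`.
-/

open scoped ComplexOrder

namespace Matrix

variable {ι κ R : Type*} [Fintype ι] [Fintype κ]

theorem mulVec_apply_eq_submatrix_mulVec [NonUnitalNonAssocSemiring R] (A : Matrix ι ι R)
    {f : κ → ι} (hf : Function.Injective f) (v : ι → R) (s : κ)
    (hA : ∀ k ∉ Set.range f, A (f s) k = 0) :
    (A *ᵥ v) (f s) = (A.submatrix f f *ᵥ (v ∘ f)) s := by
  simp only [mulVec, dotProduct, submatrix_apply, Function.comp_apply]
  exact (Fintype.sum_of_injective f hf _ _ (fun k hk => by rw [hA k hk, zero_mul])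
    fun _ => rfl).symm

theorem mulVec_extend_apply [NonUnitalNonAssocSemiring R] (A : Matrix ι ι R)
    {f : κ → ι} (hf : Function.Injective f) (x : κ → R) (s : κ) :
    (A *ᵥ Function.extend f x 0) (f s) = (A.submatrix f f *ᵥ x) s := by
  simp only [mulVec, dotProduct, submatrix_apply]
  refine (Fintype.sum_of_injective f hf _ _ (fun k hk => ?_) fun t => ?_).symm
  · rw [Function.extend_apply' _ _ _ (by simpa using hk), Pi.zero_apply, mul_zero]
  · rw [hf.extend_apply]

section ConjTransposeMulSelf
variable [Semiring R] [StarRing R] (A : Matrix ι ι R)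

theorem conjTranspose_mul_self_apply_of_block [DecidableEq ι] [DecidableEq κ]
    {f : κ → ι} (hf : Function.Injective f) (hA : ∀ k ∉ Set.range f, ∀ s, A k (f s) = 0)
    (hU : (A.submatrix f f)ᴴ * A.submatrix f f = 1) (s t : κ) :
    (Aᴴ * A) (f s) (f t) = (1 : Matrix ι ι R) (f s) (f t) := by
  have hcol : (Aᴴ * A) (f s) (f t) = (Aᴴ *ᵥ fun k => A k (f t)) (f s) := rfl
  rw [hcol, mulVec_apply_eq_submatrix_mulVec _ hf _ _ fun k hk => by
    rw [conjTranspose_apply, hA k hk, star_zero], ← conjTranspose_submatrix]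
  exact (congrFun₂ hU s t).trans (congrFun₂ (submatrix_one _ hf) s t).symm

theorem conjTranspose_mul_self_apply_eq_zero_of_ne {β : Type*} (g : ι → β)
    (hA : ∀ k i, g k ≠ g i → A k i = 0) {i j : ι} (hij : g i ≠ g j) : (Aᴴ * A) i j = 0 :=
  Finset.sum_eq_zero fun k _ => by
    by_cases hk : g k = g i
    · simp [hA k j (hk ▸ hij)]
    · simp [hA k i hk]

theorem conjTranspose_mul_self_apply_self [DecidableEq ι] {i : ι} (hA : ∀ k ≠ i, A k i = 0) :
    (Aᴴ * A) i i = star (A i i) * A i i :=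
  Fintype.sum_eq_single i fun k hk => by simp [hA k hk]

end ConjTransposeMulSelf

theorem mulVec_eq_smul_of_eqOn_support {𝕜 : Type*} [RCLike 𝕜] [DecidableEq ι]
    {U : Matrix ι ι 𝕜} (hU : Uᴴ * U = 1) {μ : 𝕜} (hμ : ‖μ‖ = 1) {v : ι → 𝕜}
    (h : ∀ k, v k ≠ 0 → (U *ᵥ v) k = μ * v k) : U *ᵥ v = μ • v := by
  set d := U *ᵥ v - μ • v with hd
  have hvd : star v ⬝ᵥ d = 0 := Finset.sum_eq_zero fun k _ => by
    by_cases hk : v k = 0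
    · simp [hk]
    · simp [d, h k hk]
  have hdv : star d ⬝ᵥ v = 0 := by rw [star_dotProduct, hvd, star_zero]
  have hiso : star (U *ᵥ v) ⬝ᵥ (U *ᵥ v) = star v ⬝ᵥ v := by
    rw [star_mulVec, ← dotProduct_mulVec, mulVec_mulVec, hU, one_mulVec]
  have hμμ : star μ * μ = 1 := by
    rw [RCLike.star_def, RCLike.conj_mul, hμ, RCLike.ofReal_one, one_pow]
  rw [show U *ᵥ v = μ • v + d by rw [hd]; abel] at hiso
  simp only [star_add, star_smul, add_dotProduct, dotProduct_add, smul_dotProduct,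
    dotProduct_smul, hvd, hdv, smul_eq_mul] at hiso
  have hdd : star d ⬝ᵥ d = 0 := by linear_combination hiso - (star v ⬝ᵥ v) * hμμ
  exact sub_eq_zero.mp (dotProduct_star_self_eq_zero.mp hdd)

end Matrix

theorem conj_rho (a : ℂ) : (starRingEnd ℂ) (rho a) = rho a := Complex.conj_ofReal _

theorem rho_mul_self {a : ℂ} (ha : ‖a‖ ≤ 1) :
    rho a * rho a = 1 - (starRingEnd ℂ) a * a := by
  rw [rho, ← Complex.ofReal_mul, Real.mul_self_sqrt (by nlinarith [norm_nonneg a]),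
    Complex.conj_mul']
  push_cast; ring

theorem rho_ne_zero {a : ℂ} (ha : ‖a‖ < 1) : rho a ≠ 0 := by
  rw [rho, Complex.ofReal_ne_zero, Real.sqrt_ne_zero']
  nlinarith [norm_nonneg a]

theorem Theta_conjTranspose_mul_self {a : ℂ} (ha : ‖a‖ ≤ 1) :
    (Theta a)ᴴ * Theta a = 1 := by
  ext s t
  fin_cases s <;> fin_cases t <;> simp [Theta, mul_apply, conj_rho, rho_mul_self ha, mul_comm]

def blockPair {n p : ℕ} (hp : p < n) (u : Fin 2) : Fin (n + 1) := ⟨p + u, by omega⟩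

section BlockPair
variable {n p : ℕ} (hp : p < n)

theorem blockPair_injective : Function.Injective (blockPair hp) := fun u v h => by
  simpa [blockPair, Fin.ext_iff] using h

theorem mem_range_blockPair {k : Fin (n + 1)} :
    k ∈ Set.range (blockPair hp) ↔ p ≤ k.val ∧ k.val ≤ p + 1 := by
  constructor
  · rintro ⟨u, rfl⟩
    simp only [blockPair]; omega
  · exact fun hk => ⟨⟨k.val - p, by omega⟩, Fin.ext (by simp only [blockPair]; omega)⟩

end BlockPair

section Factors
variable {n : ℕ} {α : ℕ → ℂ} {b : ℂ}

theorem Lmat_apply_eq_zero {i j : Fin (n + 1)} (h : i.val / 2 ≠ j.val / 2) :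
    Lmat n α b i j = 0 := by
  have := i.isLt; have := j.isLt
  rw [Lmat, of_apply]
  split_ifs <;> first | rfl | omega

theorem Lmat_submatrix_blockPair {p : ℕ} (hp : Even p) (hpn : p < n) :
    (Lmat n α b).submatrix (blockPair hpn) (blockPair hpn) = Theta (α p) := by
  rw [Nat.even_iff] at hp
  ext s t
  simp only [submatrix_apply, Lmat, Theta, blockPair, of_apply]
  fin_cases s <;> fin_cases t <;>
    simp only [Fin.zero_eta, Fin.mk_one, cons_val', cons_val_zero, cons_val_one,
      cons_val_fin_one] <;>
    split_ifs <;> first | rfl | omega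

theorem Lmat_last_last (hn : Even n) :
    Lmat n α b (Fin.last n) (Fin.last n) = (starRingEnd ℂ) b := by
  rw [Nat.even_iff] at hn
  simp [Lmat, hn]

theorem Mmat_apply_eq_zero {i j : Fin (n + 1)} (h : (i.val + 1) / 2 ≠ (j.val + 1) / 2) :
    Mmat n α b i j = 0 := by
  have := i.isLt; have := j.isLt
  rw [Mmat, of_apply]
  split_ifs <;> first | rfl | omega

theorem Mmat_zero_zero : Mmat n α b 0 0 = 1 := by
  simp [Mmat]

theorem Mmat_submatrix_blockPair {p : ℕ} (hp : Odd p) (hpn : p < n) :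
    (Mmat n α b).submatrix (blockPair hpn) (blockPair hpn) = Theta (α p) := by
  rw [Nat.odd_iff] at hp
  ext s t
  simp only [submatrix_apply, Mmat, Theta, blockPair, of_apply]
  fin_cases s <;> fin_cases t <;>
    simp only [Fin.zero_eta, Fin.mk_one, cons_val', cons_val_zero, cons_val_one,
      cons_val_fin_one] <;>
    split_ifs <;> first | rfl | omega | contradiction

theorem Mmat_last_last (hn : Odd n) :
    Mmat n α b (Fin.last n) (Fin.last n) = (starRingEnd ℂ) b := by
  rw [Nat.odd_iff] at hn
  simp [Mmat, hn, show n ≠ 0 by omega]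

theorem Lmat_conjTranspose_mul_self (hα : ∀ j < n, ‖α j‖ < 1) (hb : ‖b‖ = 1) :
    (Lmat n α b)ᴴ * Lmat n α b = 1 := by
  ext i j
  have := i.isLt; have := j.isLt
  by_cases hij : i.val / 2 = j.val / 2
  swap
  · rw [one_apply_ne (by rintro rfl; exact hij rfl)]
    exact conjTranspose_mul_self_apply_eq_zero_of_ne _ (fun k : Fin (n + 1) => k.val / 2)
      (fun _ _ => Lmat_apply_eq_zero) hij
  generalize hp : 2 * (i.val / 2) = p
  by_cases hpn : p < n
  · obtain ⟨s, rfl⟩ := (mem_range_blockPair (k := i) hpn).mpr (by omega)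
    obtain ⟨t, rfl⟩ := (mem_range_blockPair (k := j) hpn).mpr (by omega)
    refine conjTranspose_mul_self_apply_of_block _ (blockPair_injective hpn)
      (fun k hk u => Lmat_apply_eq_zero ?_) ?_ s t
    · rw [mem_range_blockPair] at hk
      simp only [blockPair] at hp ⊢; omega
    · rw [Lmat_submatrix_blockPair (hp ▸ even_two_mul _) hpn]
      exact Theta_conjTranspose_mul_self (hα _ hpn).le
  · obtain rfl : i = Fin.last n := Fin.ext (by rw [Fin.val_last]; omega)
    obtain rfl : j = Fin.last n := Fin.ext (by rw [Fin.val_last] at hij ⊢; omega)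
    have hn : Even n := Nat.even_iff.mpr (by rw [Fin.val_last] at hp; omega)
    rw [one_apply_eq, conjTranspose_mul_self_apply_self _ fun k hk => Lmat_apply_eq_zero (by
      have := Fin.val_ne_iff.mpr hk; rw [Fin.val_last] at this ⊢; omega), Lmat_last_last hn]
    simp [Complex.mul_conj', hb]

theorem Mmat_conjTranspose_mul_self (hα : ∀ j < n, ‖α j‖ < 1) (hb : ‖b‖ = 1) :
    (Mmat n α b)ᴴ * Mmat n α b = 1 := by
  ext i j
  have := i.isLt; have := j.isLt
  by_cases hij : (i.val + 1) / 2 = (j.val + 1) / 2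
  swap
  · rw [one_apply_ne (by rintro rfl; exact hij rfl)]
    exact conjTranspose_mul_self_apply_eq_zero_of_ne _ (fun k : Fin (n + 1) => (k.val + 1) / 2)
      (fun _ _ => Mmat_apply_eq_zero) hij
  by_cases hi0 : i.val = 0
  · obtain rfl : i = 0 := Fin.ext hi0
    obtain rfl : j = 0 := Fin.ext (by rw [Fin.val_zero] at hij ⊢; omega)
    rw [one_apply_eq, conjTranspose_mul_self_apply_self _ fun k hk => Mmat_apply_eq_zero (by
      have := Fin.val_ne_iff.mpr hk; rw [Fin.val_zero] at this ⊢; omega), Mmat_zero_zero]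
    simp
  generalize hp : 2 * ((i.val + 1) / 2) - 1 = p
  by_cases hpn : p < n
  · obtain ⟨s, rfl⟩ := (mem_range_blockPair (k := i) hpn).mpr (by omega)
    obtain ⟨t, rfl⟩ := (mem_range_blockPair (k := j) hpn).mpr (by omega)
    refine conjTranspose_mul_self_apply_of_block _ (blockPair_injective hpn)
      (fun k hk u => Mmat_apply_eq_zero ?_) ?_ s t
    · rw [mem_range_blockPair] at hk
      simp only [blockPair] at hp hi0 ⊢; omega
    · have hp_odd : Odd p := Nat.odd_iff.mpr (by simp only [blockPair] at hp hi0; omega)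
      rw [Mmat_submatrix_blockPair hp_odd hpn]
      exact Theta_conjTranspose_mul_self (hα _ hpn).le
  · obtain rfl : i = Fin.last n := Fin.ext (by rw [Fin.val_last]; omega)
    obtain rfl : j = Fin.last n := Fin.ext (by rw [Fin.val_last] at hij ⊢; omega)
    have hn : Odd n := Nat.odd_iff.mpr (by rw [Fin.val_last] at hp hi0; omega)
    rw [one_apply_eq, conjTranspose_mul_self_apply_self _ fun k hk => Mmat_apply_eq_zero (by
      have := Fin.val_ne_iff.mpr hk; rw [Fin.val_last] at this ⊢; omega), Mmat_last_last hn]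
    simp [Complex.mul_conj', hb]

theorem CMV_conjTranspose_mul_self (hα : ∀ j < n, ‖α j‖ < 1) (hb : ‖b‖ = 1) :
    (CMV n α b)ᴴ * CMV n α b = 1 := by
  rw [CMV, conjTranspose_mul, Matrix.mul_assoc, ← Matrix.mul_assoc (Lmat n α b)ᴴ,
    Lmat_conjTranspose_mul_self hα hb, Matrix.one_mul, Mmat_conjTranspose_mul_self hα hb]

theorem Mmat_mulVec_apply_blockPair {p : ℕ} (hp : Odd p) (hpn : p < n) (v : Fin (n + 1) → ℂ) :
    (Mmat n α b *ᵥ v) ⟨p, by omega⟩ =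
        (starRingEnd ℂ) (α p) * v ⟨p, by omega⟩ + rho (α p) * v ⟨p + 1, by omega⟩ ∧
      (Mmat n α b *ᵥ v) ⟨p + 1, by omega⟩ =
        rho (α p) * v ⟨p, by omega⟩ - α p * v ⟨p + 1, by omega⟩ := by
  have h s := mulVec_apply_eq_submatrix_mulVec (Mmat n α b) (blockPair_injective hpn) v s
    fun k hk => Mmat_apply_eq_zero (by
      rw [mem_range_blockPair] at hk
      rw [Nat.odd_iff] at hp
      simp only [blockPair]; omega)
  rw [Mmat_submatrix_blockPair hp hpn] at h
  exact ⟨by simpa [Theta, blockPair, vecHead, vecTail] using h 0,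
    by simpa [Theta, blockPair, vecHead, vecTail, sub_eq_add_neg] using h 1⟩

theorem conjTranspose_Lmat_mulVec_apply_blockPair {p : ℕ} (hp : Even p) (hpn : p < n)
    (v : Fin (n + 1) → ℂ) :
    ((Lmat n α b)ᴴ *ᵥ v) ⟨p, by omega⟩ =
        α p * v ⟨p, by omega⟩ + rho (α p) * v ⟨p + 1, by omega⟩ ∧
      ((Lmat n α b)ᴴ *ᵥ v) ⟨p + 1, by omega⟩ =
        rho (α p) * v ⟨p, by omega⟩ - (starRingEnd ℂ) (α p) * v ⟨p + 1, by omega⟩ := by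
  have h s := mulVec_apply_eq_submatrix_mulVec (Lmat n α b)ᴴ (blockPair_injective hpn) v s
    fun k hk => by
      rw [mem_range_blockPair] at hk
      rw [Nat.even_iff] at hp
      rw [conjTranspose_apply, Lmat_apply_eq_zero (by simp only [blockPair]; omega), star_zero]
  rw [← conjTranspose_submatrix, Lmat_submatrix_blockPair hp hpn] at h
  exact ⟨by simpa [Theta, blockPair, conj_rho] using h 0,
    by simpa [Theta, blockPair, conj_rho, sub_eq_add_neg] using h 1⟩

theorem Mmat_mulVec_zero (v : Fin (n + 1) → ℂ) : (Mmat n α b *ᵥ v) 0 = v 0 := by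
  rw [mulVec, dotProduct, Fintype.sum_eq_single 0 fun k hk => by
    rw [Mmat_apply_eq_zero (by have := Fin.val_ne_iff.mpr hk; rw [Fin.val_zero] at this ⊢; omega),
      zero_mul], Mmat_zero_zero, one_mul]

theorem eq_zero_of_CMV_mulVec_eq_smul (hα : ∀ j < n, ‖α j‖ < 1) (hb : ‖b‖ = 1)
    {μ : ℂ} (hμ : μ ≠ 0) {v : Fin (n + 1) → ℂ} (hv : CMV n α b *ᵥ v = μ • v) (h0 : v 0 = 0) :
    v = 0 := by
  have hMv : Mmat n α b *ᵥ v = μ • ((Lmat n α b)ᴴ *ᵥ v) := by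
    rw [← mulVec_smul, ← hv, CMV, ← mulVec_mulVec, mulVec_mulVec,
      Lmat_conjTranspose_mul_self hα hb, one_mulVec]
  suffices h : ∀ k (hk : k < n + 1), v ⟨k, hk⟩ = 0 from funext fun k => h k k.isLt
  intro k
  induction k using Nat.twoStepInduction with
  | zero => exact fun _ => h0
  | one =>
    intro h1
    have e : 0 = μ * ((Lmat n α b)ᴴ *ᵥ v) ⟨0, by omega⟩ := by
      simpa [Mmat_mulVec_zero, h0] using congrFun hMv 0
    rw [(conjTranspose_Lmat_mulVec_apply_blockPair Even.zero (by omega) v).1,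
      show v ⟨0, _⟩ = 0 from h0] at e
    simpa [hμ, rho_ne_zero (hα 0 (by omega)), eq_comm (a := (0 : ℂ))] using e
  | more i hi hi1 =>
    intro hi2
    have e := congrFun hMv ⟨i + 1, by omega⟩
    rw [Pi.smul_apply, smul_eq_mul] at e
    rcases Nat.even_or_odd i with hi_even | hi_odd
    · rw [(Mmat_mulVec_apply_blockPair hi_even.add_one (by omega) v).1,
        (conjTranspose_Lmat_mulVec_apply_blockPair hi_even (by omega) v).2,
        hi (by omega), hi1 (by omega)] at e
      simpa [hμ, rho_ne_zero (hα (i + 1) (by omega))] using e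
    · rw [(Mmat_mulVec_apply_blockPair hi_odd (by omega) v).2,
        (conjTranspose_Lmat_mulVec_apply_blockPair hi_odd.add_one (by omega) v).1,
        hi (by omega), hi1 (by omega)] at e
      simpa [hμ, rho_ne_zero (hα (i + 1) (by omega))] using e

end Factors

/-- The trailing `(n-m)×(n-m)` principal submatrix `C₂₂` of the CMV matrix
`C(α₀,…,α_{n-1},bₙ)` has no eigenvalues on the unit circle. -/
theorem stmt_9 (n m : ℕ) (α : ℕ → ℂ) (hα : ∀ j < n, ‖α j‖ < 1)
    (b : ℂ) (hb : ‖b‖ = 1) :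
    ∀ μ ∈ spectrum ℂ
        ((CMV n α b).submatrix
          (fun i : Fin (n - m) => (⟨m + 1 + i.val, by omega⟩ : Fin (n+1)))
          (fun i : Fin (n - m) => (⟨m + 1 + i.val, by omega⟩ : Fin (n+1)))),
      ‖μ‖ ≠ 1 := by
  intro μ hμC₂₂ hμ
  set f : Fin (n - m) → Fin (n + 1) := fun i => ⟨m + 1 + i.val, by omega⟩
  have hf : Function.Injective f := fun i j h => Fin.ext (by simpa [f] using h)
  obtain ⟨x, hx⟩ := (Module.End.hasEigenvalue_iff_mem_spectrum
    (f := toLin' ((CMV n α b).submatrix f f))).mpr (by rwa [spectrum_toLin'])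
    |>.exists_hasEigenvector
  have hxμ : (CMV n α b).submatrix f f *ᵥ x = μ • x := by simpa using hx.apply_eq_smul
  set v := Function.extend f x 0
  have hv : CMV n α b *ᵥ v = μ • v :=
    mulVec_eq_smul_of_eqOn_support (CMV_conjTranspose_mul_self hα hb) hμ fun k hk => by
      obtain ⟨s, rfl⟩ : k ∈ Set.range f := by
        by_contra h
        exact hk (Function.extend_apply' _ _ _ (by simpa using h))
      rw [mulVec_extend_apply _ hf, hxμ]
      simp [v, hf.extend_apply]
  have hv0 : v 0 = 0 :=
    Function.extend_apply' _ _ _ fun ⟨s, hs⟩ => by simp [f, Fin.ext_iff] at hs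
  have hv_eq_zero := eq_zero_of_CMV_mulVec_eq_smul hα hb (by rintro rfl; simp at hμ) hv hv0
  exact hx.2 (funext fun s => by simpa [v, hf.extend_apply] using congrFun hv_eq_zero (f s))
end
end
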